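/- arXiv:2106.01058 — 2 statements merged into one kernel-verified Lean document; each statement's English description precedes it below -/
import Mathlib

section
/- Let K, L ∈ ℕ and let Q be a homogeneous real polynomial in L variables with deg Q > K. If Q does not lie in ℚ[n]+ℝ, then the set of (h₁,…,h_K) ∈ (ℤ^L)^K such that the polynomial n ↦ Δ^K Q(n,h₁,…,h_K) lies in ℚ[n]+ℝ has upper Banach density 0; equivalently, the set of (h₁,…,h_K) ∈ (ℤ^L)^K for which Δ^K Q(·,h₁,…,h_K) does not lie in ℚ[n]+ℝ has density 1. -/
noncomputable section

open Filter in
open scoped Classical in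
/-- The upper Banach density of a subset of `ι → ℤ`:
`d*(E) = limsup_{N→∞} sup_{t} |(E−t) ∩ {1,…,N}^ι| / N^{|ι|}`. -/
noncomputable def upperBanachDensity {ι : Type*} [Fintype ι] [DecidableEq ι]
    (E : Set (ι → ℤ)) : ℝ :=
  limsup (fun N : ℕ =>
      ⨆ t : ι → ℤ,
        ((((Finset.Icc (fun _ => (1 : ℤ)) (fun _ => (N : ℤ))).filter
              fun x => x + t ∈ E).card : ℝ) /
          (N : ℝ) ^ Fintype.card ι))
    atTop

/-- The iterated difference operator `Δ^K`, acting on functions on `ℤ^L`: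
`ΔP(n, h₁, …, h_K) = P(n + h_K, h₁, …, h_{K−1}) − P(n, h₁, …, h_{K−1})`. -/
def deltaIter {L : ℕ} {α : Type*} [AddCommGroup α] :
    (K : ℕ) → ((Fin L → ℤ) → α) → (Fin L → ℤ) → (Fin K → Fin L → ℤ) → α
  | 0, f, n, _ => f n
  | K + 1, f, n, h =>
      deltaIter K f (n + h (Fin.last K)) (Fin.init h) - deltaIter K f n (Fin.init h)

/-- A function `ℤ^L → ℝ` agrees with a polynomial in `ℚ[n] + ℝ`, i.e. with a rational
polynomial plus a real constant. -/
def IsRatPlusConst {L : ℕ} (P : (Fin L → ℤ) → ℝ) : Prop :=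
  ∃ (R : MvPolynomial (Fin L) ℚ) (c : ℝ), ∀ n : Fin L → ℤ,
    P n = MvPolynomial.eval (fun i => ((n i : ℤ) : ℝ)) (MvPolynomial.map (algebraMap ℚ ℝ) R) + c

/-! Choose an irrational coefficient of `Q` and a `ℚ`-linear form `φ : ℝ → ℚ` vanishing on `ℚ`
but not on that coefficient. Applying `φ` to the coefficients of `Q` gives a nonzero rational
polynomial `Qφ`, homogeneous of degree `D`, with `Qφ(n) = φ(Q(n))` on `ℤ^L`. If
`Δ^K Q(·, h) ∈ ℚ[n] + ℝ`, then `Δ^K Qφ(·, h) = φ ∘ Δ^K Q(·, h)` is constant, so `h` is a zero of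
the polynomial `G(h) = Δ^K Qφ(n₀, h) - Δ^K Qφ(0, h)`. On the diagonal `h = (v, …, v)` the `D`-th
difference of `Qφ` is `D! Qφ(v)`, so for `K < D` and `Qφ(v) ≠ 0` the function `Δ^K Qφ(·, v, …, v)`
is not constant, which gives an `n₀` with `G ≠ 0`. By Schwartz–Zippel the integer zeros of a
nonzero polynomial have upper Banach density `0`. -/

open Finset MvPolynomial
open scoped fwdDiff

theorem Finset.sum_powerset_map {ι κ M : Type*} [DecidableEq κ] [AddCommMonoid M]
    (s : Finset ι) (e : ι ↪ κ) (f : Finset κ → M) :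
    ∑ t ∈ (s.map e).powerset, f t = ∑ t ∈ s.powerset, f (t.map e) := by
  classical
  simp_rw [map_eq_image, powerset_image]
  exact sum_image (image_injOn_powerset_of_injOn e.injective.injOn)

theorem fwdDiff_iter_eq_zero_of_forall_eq {M G : Type*} [AddCommMonoid M] [AddCommGroup G]
    {f : M → G} {h : M} {K D : ℕ} (hf : ∀ x, Δ_[h] ^[K] f x = Δ_[h] ^[K] f 0) (hKD : K < D) :
    Δ_[h] ^[D] f = 0 := by
  obtain ⟨j, rfl⟩ := Nat.exists_eq_add_of_lt hKD
  rw [add_assoc, add_comm, Function.iterate_add_apply, funext hf, Function.iterate_succ_apply,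
    fwdDiff_const]
  exact Function.iterate_fixed (fwdDiff_const h 0) j

section DeltaIter

variable {L : ℕ} {α β : Type*} [AddCommGroup α] [AddCommGroup β]

theorem deltaIter_map (φ : α →+ β) (f : (Fin L → ℤ) → α) :
    ∀ (K : ℕ) (n : Fin L → ℤ) (h : Fin K → Fin L → ℤ),
      deltaIter K (fun x => φ (f x)) n h = φ (deltaIter K f n h)
  | 0, _, _ => rfl
  | K + 1, n, h => by simp only [deltaIter, deltaIter_map φ f K, map_sub]

theorem deltaIter_const_eq_fwdDiff_iter (f : (Fin L → ℤ) → α) (v : Fin L → ℤ) :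
    ∀ (K : ℕ) (n : Fin L → ℤ), deltaIter K f n (fun _ => v) = Δ_[v] ^[K] f n
  | 0, _ => rfl
  | K + 1, n => by
    rw [Function.iterate_succ_apply', fwdDiff]
    exact congrArg₂ (· - ·) (deltaIter_const_eq_fwdDiff_iter f v K _)
      (deltaIter_const_eq_fwdDiff_iter f v K n)

-- The sign is `(-1) ^ (K - #S)`, written so as to avoid truncated subtraction.
theorem deltaIter_eq_sum_powerset (f : (Fin L → ℤ) → α) :
    ∀ (K : ℕ) (n : Fin L → ℤ) (h : Fin K → Fin L → ℤ),
      deltaIter K f n h = ∑ S ∈ (univ : Finset (Fin K)).powerset,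
        (-1 : ℤ) ^ (K + #S) • f (n + ∑ i ∈ S, h i)
  | 0, n, h => by simp [deltaIter]
  | K + 1, n, h => by
    have hlast : ∀ T : Finset (Fin K), Fin.last K ∉ T.map Fin.castSuccEmb := by
      simp [Fin.castSucc_ne_last]
    rw [deltaIter, deltaIter_eq_sum_powerset f K, deltaIter_eq_sum_powerset f K,
      Fin.univ_castSuccEmb, cons_eq_insert, sum_powerset_insert (hlast _), sum_powerset_map,
      sum_powerset_map, sub_eq_neg_add, ← sum_neg_distrib]
    congr 1 <;> refine sum_congr rfl fun T _ => ?_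
    · rw [card_map, add_right_comm, pow_succ, mul_neg_one, neg_smul]
      simp [Fin.init]
    · rw [card_insert_of_notMem (hlast T), card_map, show K + 1 + (#T + 1) = K + #T + 2 by omega,
        pow_add (-1 : ℤ) (K + #T) 2, neg_one_sq, mul_one]
      simp [sum_insert (hlast T), Fin.init, add_assoc]

end DeltaIter

namespace MvPolynomial

variable {σ R : Type*}

theorem IsHomogeneous.eval_smul [CommSemiring R] {P : MvPolynomial σ R} {D : ℕ}
    (hP : P.IsHomogeneous D) (t : R) (x : σ → R) : eval (t • x) P = t ^ D * eval x P := by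
  rw [eval_eq, eval_eq, mul_sum]
  refine sum_congr rfl fun m hm => ?_
  have hdeg : ∑ i ∈ m.support, m i = D := by
    rw [← Finsupp.degree_apply, Finsupp.degree_eq_weight_one]; exact hP (mem_support_iff.mp hm)
  simp_rw [Pi.smul_apply, smul_eq_mul, mul_pow, prod_mul_distrib, prod_pow_eq_pow_sum, hdeg]
  ring

theorem eval_bind₁ [CommSemiring R] {τ : Type*} (x : τ → R) (g : σ → MvPolynomial τ R)
    (P : MvPolynomial σ R) : eval x (bind₁ g P) = eval (fun i => eval x (g i)) P :=
  eval₂Hom_bind₁ _ _ _ _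

theorem exists_eval_intCast_ne_zero [CommRing R] [IsDomain R] [CharZero R]
    {P : MvPolynomial σ R} (hP : P ≠ 0) : ∃ v : σ → ℤ, eval (fun i => (v i : R)) P ≠ 0 := by
  by_contra! hzero
  refine hP (funext_set (fun _ => Set.range ((↑) : ℤ → R))
    (fun _ => Set.infinite_range_of_injective Int.cast_injective) fun x hx => ?_)
  choose v hv using Set.mem_univ_pi.mp hx
  simpa [_root_.funext hv] using hzero v

theorem eval_intCast_addMonoidAlgebraMap {S : Type*} [CommRing R] [CommRing S] (φ : R →+ S)
    (P : MvPolynomial σ R) (n : σ → ℤ) :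
    eval (fun i => (n i : S)) (AddMonoidAlgebra.map φ P) = φ (eval (fun i => (n i : R)) P) := by
  induction P using MvPolynomial.induction_on' with
  | monomial m a =>
    rw [← single_eq_monomial, AddMonoidAlgebra.map_single]
    simp only [single_eq_monomial, eval_monomial, Finsupp.prod, ← Int.cast_pow, ← Int.cast_prod,
      ← zsmul_eq_mul', map_zsmul]
  | add p q hp hq =>
    rw [AddMonoidAlgebra.map_add, map_add, hp, hq, map_add, map_add]

section Differences

variable [CommRing R] {L : ℕ}

theorem exists_eval_eq_deltaIter (P : MvPolynomial (Fin L) R) (K : ℕ) (n : Fin L → ℤ) :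
    ∃ G : MvPolynomial (Fin K × Fin L) R, ∀ h : Fin K × Fin L → ℤ,
      eval (fun w => (h w : R)) G =
        deltaIter K (fun x => eval (fun l => (x l : R)) P) n (fun i l => h (i, l)) := by
  refine ⟨∑ S ∈ (univ : Finset (Fin K)).powerset, (-1 : ℤ) ^ (K + #S) •
    bind₁ (fun l => C (n l : R) + ∑ i ∈ S, X (i, l)) P, fun h => ?_⟩
  simp [deltaIter_eq_sum_powerset, eval_bind₁]

theorem IsHomogeneous.fwdDiff_iter_eval_intCast {D : ℕ} {P : MvPolynomial (Fin L) R}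
    (hP : P.IsHomogeneous D) (v : Fin L → ℤ) :
    Δ_[v] ^[D] (fun x : Fin L → ℤ => eval (fun l => (x l : R)) P) 0 =
      D.factorial * eval (fun l => (v l : R)) P := by
  have hline (k : ℕ) :
      eval (fun l => ((0 + k • v) l : R)) P = (k : R) ^ D * eval (fun l => (v l : R)) P := by
    have hsmul : (fun l => ((0 + k • v) l : R)) = (k : R) • fun l => (v l : R) := by ext; simp
    rw [hsmul, hP.eval_smul]
  have hpow := congrFun (fwdDiff_iter_eq_factorial (R := R) (n := D)) 0
  rw [fwdDiff_iter_eq_sum_shift] at hpow ⊢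
  simp_rw [hline, ← smul_mul_assoc, ← sum_mul]
  simpa using congrArg (· * eval (fun l => (v l : R)) P) hpow

theorem IsHomogeneous.exists_deltaIter_ne [IsDomain R] [CharZero R] {K D : ℕ}
    {P : MvPolynomial (Fin L) R} (hP : P.IsHomogeneous D) (hP0 : P ≠ 0) (hKD : K < D) :
    ∃ (n : Fin L → ℤ) (h : Fin K → Fin L → ℤ),
      deltaIter K (fun x => eval (fun l => (x l : R)) P) n h ≠
        deltaIter K (fun x => eval (fun l => (x l : R)) P) 0 h := by
  obtain ⟨v, hv⟩ := exists_eval_intCast_ne_zero hP0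
  by_contra! hconst
  have hzero := fwdDiff_iter_eq_zero_of_forall_eq
    (fun n => by simpa only [deltaIter_const_eq_fwdDiff_iter] using hconst n fun _ => v) hKD
  have hdiag := hP.fwdDiff_iter_eval_intCast v
  rw [hzero] at hdiag
  exact mul_ne_zero (Nat.cast_ne_zero.mpr D.factorial_ne_zero) hv hdiag.symm

end Differences

theorem schwartz_zippel_sum_degreeOf_fintype {ι : Type*} [Fintype ι] [DecidableEq ι] [CommRing R]
    [IsDomain R] [DecidableEq R] {p : MvPolynomial ι R} (hp : p ≠ 0) (S : ι → Finset R) :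
    #{x ∈ Fintype.piFinset S | eval x p = 0} / ∏ i, (#(S i) : ℚ≥0) ≤
      ∑ i, (p.degreeOf i / #(S i) : ℚ≥0) := by
  set e := Fintype.equivFin ι
  have hp' : rename e p ≠ 0 := fun h => hp (rename_injective e e.injective (by simpa using h))
  have hSZ := schwartz_zippel_sum_degreeOf hp' (fun j => S (e.symm j))
  have hcard : #{x ∈ Fintype.piFinset fun j => S (e.symm j) | eval x (rename e p) = 0} =
      #{x ∈ Fintype.piFinset S | eval x p = 0} := by
    refine card_bij (fun x _ => x ∘ e) (fun x hx => ?_) (fun x _ y _ hxy => ?_) (fun y hy => ?_)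
    · simp only [mem_filter, Fintype.mem_piFinset, eval_rename] at hx ⊢
      exact ⟨fun i => by simpa using hx.1 (e i), hx.2⟩
    · exact (e.arrowCongr (Equiv.refl R)).symm.injective hxy
    · refine ⟨y ∘ e.symm, ?_, by ext; simp⟩
      simp only [mem_filter, Fintype.mem_piFinset, eval_rename] at hy ⊢
      exact ⟨fun j => hy.1 _, by simpa [Function.comp_def] using hy.2⟩
  rw [hcard, e.symm.prod_comp (fun i => (#(S i) : ℚ≥0))] at hSZ
  refine hSZ.trans_eq ?_
  rw [← e.sum_comp]
  simp [degreeOf_rename_of_injective e.injective]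

end MvPolynomial

section Density

variable {ι R : Type*} [Fintype ι] [DecidableEq ι] [CommRing R] [IsDomain R] [CharZero R]
  {E : Set (ι → ℤ)} {G : MvPolynomial ι R}

open scoped Classical in
theorem card_filter_add_mem_le_of_eval_eq_zero (hG : G ≠ 0)
    (hE : ∀ h ∈ E, eval (fun i => (h i : R)) G = 0) (N : ℕ) (t : ι → ℤ) :
    (#{x ∈ Icc (fun _ => (1 : ℤ)) (fun _ => (N : ℤ)) | x + t ∈ E} : ℝ) / (N : ℝ) ^ Fintype.card ι ≤
      (∑ i, (G.degreeOf i : ℝ)) / N := by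
  set S : ι → Finset R := fun i => (Icc (1 + t i) (N + t i)).map ⟨(↑), Int.cast_injective⟩
  have hS (i : ι) : #(S i) = N := by
    simp [S, show (N : ℤ) + t i + 1 - (1 + t i) = N by ring]
  have hcard : #{x ∈ Icc (fun _ => (1 : ℤ)) (fun _ => (N : ℤ)) | x + t ∈ E} ≤
      #{y ∈ Fintype.piFinset S | eval y G = 0} := by
    refine card_le_card_of_injOn (fun x i => ((x i + t i : ℤ) : R)) (fun x hx => ?_)
      (fun x _ y _ hxy => ?_)
    · simp only [coe_filter, Set.mem_ofPred_eq, mem_Icc] at hx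
      simp only [coe_filter, Set.mem_ofPred_eq, Fintype.mem_piFinset, S, mem_map, mem_Icc]
      refine ⟨fun i => ⟨x i + t i, ?_, rfl⟩, by simpa using hE _ hx.2⟩
      have h1 : 1 ≤ x i := hx.1.1 i
      have h2 : x i ≤ N := hx.1.2 i
      constructor <;> omega
    · ext i
      simpa using congrFun hxy i
  have hSZ := MvPolynomial.schwartz_zippel_sum_degreeOf_fintype hG S
  simp only [hS, prod_const, card_univ, ← sum_div] at hSZ
  have hSZ' := (NNRat.cast_le (K := ℝ)).mpr hSZ
  push_cast at hSZ'
  calc _ ≤ (#{y ∈ Fintype.piFinset S | eval y G = 0} : ℝ) / (N : ℝ) ^ Fintype.card ι := by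
        gcongr
    _ ≤ _ := hSZ'

open Filter in
theorem upperBanachDensity_eq_zero_of_eval_eq_zero (hG : G ≠ 0)
    (hE : ∀ h ∈ E, eval (fun i => (h i : R)) G = 0) : upperBanachDensity E = 0 :=
  Tendsto.limsup_eq <| squeeze_zero (fun _ => Real.iSup_nonneg fun _ => by positivity)
    (fun N => ciSup_le (card_filter_add_mem_le_of_eval_eq_zero hG hE N))
    (tendsto_const_div_atTop_nhds_zero_nat _)

end Density

theorem exists_irrational_coeff_of_not_isRatPlusConst {L : ℕ} {Q : MvPolynomial (Fin L) ℝ}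
    (hQ : ¬ IsRatPlusConst (fun n => eval (fun i => (n i : ℝ)) Q)) :
    ∃ m, Irrational (coeff m Q) := by
  by_contra! hrat
  obtain ⟨R, rfl⟩ : Q ∈ Set.range (map (algebraMap ℚ ℝ)) :=
    mem_range_map_iff_coeffs_subset.mpr fun x hx => by
      obtain ⟨m, -, rfl⟩ := mem_coeffs_iff.mp hx
      simpa [Irrational] using hrat m
  exact hQ ⟨R, 0, fun n => (add_zero _).symm⟩

theorem Irrational.exists_dual_ne_zero {x : ℝ} (hx : Irrational x) :
    ∃ φ : Module.Dual ℚ ℝ, φ x ≠ 0 ∧ ∀ q : ℚ, φ q = 0 := by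
  obtain ⟨φ, hφx, hφ⟩ := Submodule.exists_dual_map_eq_bot_of_notMem
    (p := LinearMap.range (Algebra.linearMap ℚ ℝ)) (by simpa [Irrational] using hx) inferInstance
  refine ⟨φ, hφx, fun q => ?_⟩
  simpa [hφ] using
    Submodule.mem_map_of_mem (f := φ) (LinearMap.mem_range_self (Algebra.linearMap ℚ ℝ) q)

theorem IsRatPlusConst.exists_dual_eq_const {L : ℕ} {P : (Fin L → ℤ) → ℝ} (hP : IsRatPlusConst P)
    {φ : Module.Dual ℚ ℝ} (hφ : ∀ q : ℚ, φ q = 0) : ∃ c, ∀ n, φ (P n) = c := by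
  obtain ⟨R, c, hRc⟩ := hP
  refine ⟨φ c, fun n => ?_⟩
  have hrat : eval (fun i => (n i : ℝ)) (map (algebraMap ℚ ℝ) R) =
      (eval (fun i => (n i : ℚ)) R : ℝ) := by
    rw [eval_map, ← eq_ratCast (algebraMap ℚ ℝ), eval₂_comp]
    simp [Function.comp_def]
  rw [hRc, map_add, hrat, hφ, zero_add]

theorem stmt12_general (K L : ℕ) (D : ℕ)
    (Q : MvPolynomial (Fin L) ℝ) (hhom : Q.IsHomogeneous D) (hdeg : K < D)
    (hirr : ¬ IsRatPlusConst (fun n => MvPolynomial.eval (fun i => ((n i : ℤ) : ℝ)) Q)) :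
    upperBanachDensity {h : Fin K × Fin L → ℤ |
      IsRatPlusConst (fun n =>
        deltaIter K (fun n' => MvPolynomial.eval (fun i => ((n' i : ℤ) : ℝ)) Q) n
          (fun i l => h (i, l)))} = 0 := by
  obtain ⟨m, hm⟩ := exists_irrational_coeff_of_not_isRatPlusConst hirr
  obtain ⟨φ, hφm, hφ⟩ := hm.exists_dual_ne_zero
  set Qφ : MvPolynomial (Fin L) ℚ := AddMonoidAlgebra.map φ.toAddMonoidHom Q
  have hQφ0 : Qφ ≠ 0 := fun h => hφm (by simpa [Qφ] using congrArg (coeff m) h)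
  have hQφhom : Qφ.IsHomogeneous D := fun d hd => hhom fun h => hd (by simp [Qφ, h])
  have hΔ (n : Fin L → ℤ) (h : Fin K → Fin L → ℤ) :
      deltaIter K (fun x => eval (fun l => (x l : ℚ)) Qφ) n h =
        φ (deltaIter K (fun x => eval (fun l => (x l : ℝ)) Q) n h) := by
    simp_rw [Qφ, eval_intCast_addMonoidAlgebraMap]
    exact deltaIter_map φ.toAddMonoidHom _ K n h
  obtain ⟨n₀, h₀, hne⟩ := hQφhom.exists_deltaIter_ne hQφ0 hdeg
  obtain ⟨G₁, hG₁⟩ := exists_eval_eq_deltaIter Qφ K n₀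
  obtain ⟨G₀, hG₀⟩ := exists_eval_eq_deltaIter Qφ K 0
  refine upperBanachDensity_eq_zero_of_eval_eq_zero (G := G₁ - G₀) (fun hG => hne ?_) fun h hE => ?_
  · simpa [sub_eq_zero, hG₁, hG₀] using congrArg (eval fun w => (h₀ w.1 w.2 : ℚ)) hG
  · obtain ⟨c, hc⟩ := hE.exists_dual_eq_const hφ
    simp [hG₁, hG₀, hΔ, hc]

/-- **Lemma.** If `Q` is homogeneous of degree `> K` and `Q ∉ ℚ[n] + ℝ`, then the set of
`(h₁,…,h_K)` for which `Δ^K Q(·, h₁, …, h_K) ∈ ℚ[n] + ℝ` has upper Banach density `0`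
(equivalently, its complement has density `1`). -/
theorem stmt12 (K L : ℕ) (hK : 0 < K) (hL : 0 < L) (D : ℕ)
    (Q : MvPolynomial (Fin L) ℝ) (hhom : Q.IsHomogeneous D) (hdeg : K < D)
    (hirr : ¬ IsRatPlusConst (fun n => MvPolynomial.eval (fun i => ((n i : ℤ) : ℝ)) Q)) :
    upperBanachDensity {h : Fin K × Fin L → ℤ |
      IsRatPlusConst (fun n =>
        deltaIter K (fun n' => MvPolynomial.eval (fun i => ((n' i : ℤ) : ℝ)) Q) n
          (fun i l => h (i, l)))} = 0 :=
  stmt12_general K L D Q hhom hdeg hirr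
end
end

section
/- Let L ∈ ℕ, K ∈ ℕ₀, and let P be a real polynomial in L variables with homogeneous decomposition P = Σ_{j≥0} Q_j, where Q_j is homogeneous of degree j. Suppose that Q_j has rational coefficients for every j > K, and set P' := Σ_{0≤j≤K} Q_j. Then there exists Q ∈ ℕ such that (P − P')(Qn + r) − (P − P')(r) ∈ ℤ for all n, r ∈ ℤ^L; consequently e^{2πi(P(Qn+r) − P'(Qn+r))} = e^{2πi(P(r) − P'(r))} for all n, r ∈ ℤ^L. -/
open MvPolynomial

lemma clear_denoms {L : ℕ} (R : MvPolynomial (Fin L) ℚ) :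
    ∃ (d : ℕ) (S : MvPolynomial (Fin L) ℤ), 0 < d ∧
      map (Int.castRingHom ℚ) S = (d : ℚ) • R := by
  classical
  set d : ℕ := ∏ m ∈ R.support, (R.coeff m).den with hd
  refine ⟨d, ∑ m ∈ R.support, monomial m (((d : ℚ) * R.coeff m).num), ?_, ?_⟩
  · exact Finset.prod_pos fun m _ => (R.coeff m).pos
  · have key : ∀ m ∈ R.support, ((((d : ℚ) * R.coeff m).num : ℚ)) = (d : ℚ) * R.coeff m := by
      intro m hm
      have hdvd : (R.coeff m).den ∣ d := Finset.dvd_prod_of_mem _ hm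
      obtain ⟨c, hc⟩ := hdvd
      have hden : ((R.coeff m).den : ℚ) ≠ 0 := Nat.cast_ne_zero.mpr (R.coeff m).den_nz
      have hq : ((R.coeff m).den : ℚ) * R.coeff m = ((R.coeff m).num : ℚ) := by
        have h0 := Rat.num_div_den (R.coeff m)
        rw [div_eq_iff hden] at h0
        rw [mul_comm]
        exact h0.symm
      have h1 : (d : ℚ) * R.coeff m = (((c : ℤ) * (R.coeff m).num : ℤ) : ℚ) := by
        rw [hc]
        push_cast
        rw [mul_comm ((R.coeff m).den : ℚ) (c : ℚ), mul_assoc, hq]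
      rw [h1, Rat.num_intCast]
    ext m
    rw [coeff_map, MvPolynomial.coeff_sum]
    simp only [coeff_monomial]
    rw [Finset.sum_ite_eq' R.support m (fun m => (((d : ℚ) * R.coeff m).num))]
    by_cases hm : m ∈ R.support
    · simp only [hm, if_true, coeff_smul, smul_eq_mul, Int.coe_castRingHom]
      exact key m hm
    · simp [hm, MvPolynomial.notMem_support_iff.mp hm]

lemma eval_map_cast {L : ℕ} {A B : Type*} [CommRing A] [CommRing B]
    (f : A →+* B) (R : MvPolynomial (Fin L) A) (k : Fin L → A) :
    eval (fun i => f (k i)) (map f R) = f (eval k R) := by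
  rw [eval_map, show (eval k R) = eval₂ (RingHom.id A) k R from rfl,
    eval₂_comp_left f (RingHom.id A) k R]
  rfl

/-- **Lemma.** If all homogeneous components of degree `> K` of `P` have rational
coefficients and `P' = Σ_{j ≤ K} Q_j`, then there is `Q ∈ ℕ` such that
`(P − P')(Qn + r) − (P − P') (r) ∈ ℤ` for all `n, r ∈ ℤ^L`; consequently
`e^{2πi(P−P')(Qn+r)} = e^{2πi(P−P')(r)}`. -/
theorem stmt15 (L : ℕ) (hL : 0 < L) (K : ℕ) (P : MvPolynomial (Fin L) ℝ)
    (hrat : ∀ j, K < j → ∃ R : MvPolynomial (Fin L) ℚ,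
      homogeneousComponent j P = map (algebraMap ℚ ℝ) R) :
    ∃ Q : ℕ, 0 < Q ∧ ∀ n r : Fin L → ℤ,
      (∃ z : ℤ,
        eval (fun i => (((Q : ℤ) * n i + r i : ℤ) : ℝ))
            (P - ∑ j ∈ Finset.range (K + 1), homogeneousComponent j P) -
          eval (fun i => ((r i : ℤ) : ℝ))
            (P - ∑ j ∈ Finset.range (K + 1), homogeneousComponent j P) = (z : ℝ)) ∧
      Complex.exp (2 * Real.pi * Complex.I *
          ((eval (fun i => (((Q : ℤ) * n i + r i : ℤ) : ℝ)) P -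
              eval (fun i => (((Q : ℤ) * n i + r i : ℤ) : ℝ))
                (∑ j ∈ Finset.range (K + 1), homogeneousComponent j P) : ℝ) : ℂ)) =
        Complex.exp (2 * Real.pi * Complex.I *
          ((eval (fun i => ((r i : ℤ) : ℝ)) P -
              eval (fun i => ((r i : ℤ) : ℝ))
                (∑ j ∈ Finset.range (K + 1), homogeneousComponent j P) : ℝ) : ℂ)) := by
  classical
  set Psub : MvPolynomial (Fin L) ℝ :=
    P - ∑ j ∈ Finset.range (K + 1), homogeneousComponent j P with hPsub
  obtain ⟨R, hR⟩ : ∃ R : MvPolynomial (Fin L) ℚ, Psub = map (algebraMap ℚ ℝ) R := by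
    set N := max (P.totalDegree + 1) (K + 1) with hN
    have h1 : (∑ j ∈ Finset.range N, homogeneousComponent j P) = P := by
      conv_rhs => rw [← sum_homogeneousComponent P]
      symm
      apply Finset.sum_subset (Finset.range_subset_range.mpr (le_max_left _ _))
      intro j _ hj
      exact homogeneousComponent_eq_zero j P
        (Nat.lt_of_succ_le (Nat.le_of_not_lt (Finset.mem_range.not.mp hj)))
    have h2 : Psub = ∑ j ∈ Finset.range N \ Finset.range (K + 1),
        homogeneousComponent j P := by
      have hss := Finset.sum_sdiff (f := fun j => homogeneousComponent j P)
        (Finset.range_subset_range.mpr (le_max_right (P.totalDegree + 1) (K + 1)))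
      rw [hPsub, sub_eq_iff_eq_add]
      exact (hss.trans h1).symm
    have hmem : ∀ j ∈ Finset.range N \ Finset.range (K + 1), K < j := by
      intro j hj
      have := (Finset.mem_sdiff.mp hj).2
      exact Nat.lt_of_succ_le (Nat.le_of_not_lt (Finset.mem_range.not.mp this))
    set Rj : ℕ → MvPolynomial (Fin L) ℚ :=
      fun j => if h : K < j then (hrat j h).choose else 0 with hRj
    refine ⟨∑ j ∈ Finset.range N \ Finset.range (K + 1), Rj j, ?_⟩
    rw [h2, map_sum]
    refine Finset.sum_congr rfl fun j hj => ?_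
    rw [hRj]
    simp only [hmem j hj, dif_pos]
    exact (hrat j (hmem j hj)).choose_spec
  obtain ⟨d, S, hd, hS⟩ := clear_denoms R
  haveI : NeZero d := ⟨hd.ne'⟩
  refine ⟨d, hd, fun n r => ?_⟩
  set a : Fin L → ℤ := fun i => (d : ℤ) * n i + r i with ha
  -- real eval of Psub at integer points is the rational eval of R
  have fact1 : ∀ k : Fin L → ℤ,
      eval (fun i => ((k i : ℤ) : ℝ)) Psub = ((eval (fun i => (k i : ℚ)) R : ℚ) : ℝ) := by
    intro k
    rw [hR]
    have := eval_map_cast (algebraMap ℚ ℝ) R (fun i => (k i : ℚ))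
    simp only [eq_ratCast, Rat.cast_intCast] at this ⊢
    exact this
  have fact2 : ∀ k : Fin L → ℤ,
      (d : ℚ) * eval (fun i => (k i : ℚ)) R = ((eval k S : ℤ) : ℚ) := by
    intro k
    rw [← smul_eval, ← hS]
    have := eval_map_cast (Int.castRingHom ℚ) S k
    simp only [eq_intCast] at this ⊢
    exact this
  have fact3 : (d : ℤ) ∣ (eval a S - eval r S) := by
    rw [← ZMod.intCast_zmod_eq_zero_iff_dvd]
    push_cast
    have hcast : ∀ k : Fin L → ℤ, ((eval k S : ℤ) : ZMod d) =
        eval (fun i => ((k i : ℤ) : ZMod d)) (map (Int.castRingHom (ZMod d)) S) := by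
      intro k
      have := eval_map_cast (Int.castRingHom (ZMod d)) S k
      simp only [eq_intCast] at this ⊢
      exact this.symm
    rw [hcast a, hcast r]
    have : (fun i => ((a i : ℤ) : ZMod d)) = fun i => ((r i : ℤ) : ZMod d) := by
      funext i
      simp [ha, ZMod.natCast_self]
    rw [this, sub_self]
  obtain ⟨z, hz⟩ := fact3
  have hqz : eval (fun i => (a i : ℚ)) R - eval (fun i => (r i : ℚ)) R = (z : ℚ) := by
    have hd0 : (d : ℚ) ≠ 0 := Nat.cast_ne_zero.mpr hd.ne'
    have : (d : ℚ) * (eval (fun i => (a i : ℚ)) R - eval (fun i => (r i : ℚ)) R)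
        = (d : ℚ) * (z : ℚ) := by
      rw [mul_sub, fact2 a, fact2 r]
      rw [← Int.cast_sub, hz]
      push_cast
      ring
    exact mul_left_cancel₀ hd0 this
  have hreal : eval (fun i => ((a i : ℤ) : ℝ)) Psub - eval (fun i => ((r i : ℤ) : ℝ)) Psub
      = ((z : ℤ) : ℝ) := by
    rw [fact1 a, fact1 r, ← Rat.cast_sub, hqz]
    push_cast
    ring
  refine ⟨⟨z, hreal⟩, ?_⟩
  have hsub : ∀ k : Fin L → ℤ, eval (fun i => ((k i : ℤ) : ℝ)) Psub =
      eval (fun i => ((k i : ℤ) : ℝ)) P -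
        eval (fun i => ((k i : ℤ) : ℝ)) (∑ j ∈ Finset.range (K + 1), homogeneousComponent j P) := by
    intro k
    rw [hPsub, map_sub]
  have hAB : ((eval (fun i => ((a i : ℤ) : ℝ)) P -
      eval (fun i => ((a i : ℤ) : ℝ)) (∑ j ∈ Finset.range (K + 1), homogeneousComponent j P) : ℝ) : ℂ)
      = ((eval (fun i => ((r i : ℤ) : ℝ)) P -
      eval (fun i => ((r i : ℤ) : ℝ)) (∑ j ∈ Finset.range (K + 1), homogeneousComponent j P) : ℝ) : ℂ)
      + (z : ℂ) := by
    rw [← hsub a, ← hsub r]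
    have : eval (fun i => ((a i : ℤ) : ℝ)) Psub
        = eval (fun i => ((r i : ℤ) : ℝ)) Psub + ((z : ℤ) : ℝ) := by linarith [hreal]
    rw [this]
    push_cast
    ring
  rw [show (2 * (Real.pi : ℂ) * Complex.I *
      ((eval (fun i => (((d : ℤ) * n i + r i : ℤ) : ℝ)) P -
        eval (fun i => (((d : ℤ) * n i + r i : ℤ) : ℝ))
          (∑ j ∈ Finset.range (K + 1), homogeneousComponent j P) : ℝ) : ℂ)) =
      2 * (Real.pi : ℂ) * Complex.I *
      ((eval (fun i => ((r i : ℤ) : ℝ)) P -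
        eval (fun i => ((r i : ℤ) : ℝ))
          (∑ j ∈ Finset.range (K + 1), homogeneousComponent j P) : ℝ) : ℂ)
      + (z : ℂ) * (2 * (Real.pi : ℂ) * Complex.I) from by rw [hAB]; ring]
  rw [Complex.exp_add, Complex.exp_int_mul_two_pi_mul_I, mul_one]
end
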